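/- arXiv:0709.2441 — 2 statements merged into one kernel-verified Lean document; each statement's English description precedes it below -/
import Mathlib

section
/- If complex numbers A_n (n ≥ 0) satisfy A_1 ∈ ℝ and the recursion (n+1)A_{n+1} + 2n A_n \bar{A}_0 + (n-1) A_{n-1} \bar{A}_0^2 = 0 for all n ≥ 1, then A_n = (-1)^{n-1} \bar{A}_0^{n-1} A_1 for all n ≥ 1. -/
open ComplexConjugate

/-- If complex numbers `A n` satisfy `A 1 ∈ ℝ` and the recursion
`(n+1)A_{n+1} + 2n A_n conj(A_0) + (n-1) A_{n-1} conj(A_0)^2 = 0` for all `n ≥ 1`,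
then `A n = (-1)^(n-1) conj(A_0)^(n-1) A_1` for all `n ≥ 1`. -/
theorem recursion_solution (A : ℕ → ℂ)
    (hA1 : (A 1).im = 0)
    (hrec : ∀ n : ℕ, 1 ≤ n →
      ((n : ℂ) + 1) * A (n + 1) + 2 * (n : ℂ) * A n * conj (A 0)
        + ((n : ℂ) - 1) * A (n - 1) * (conj (A 0))^2 = 0) :
    ∀ n : ℕ, 1 ≤ n → A n = (-1)^(n - 1) * (conj (A 0))^(n - 1) * A 1 := by
  set c := conj (A 0) with hc
  have key : ∀ m : ℕ, A (m + 1) = (-1)^m * c^m * A 1 ∧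
      A (m + 2) = (-1)^(m+1) * c^(m+1) * A 1 := by
    intro m
    induction m with
    | zero =>
      refine ⟨by simp, ?_⟩
      have h := hrec 1 le_rfl
      norm_num at h
      show A 2 = (-1)^(0+1) * c^(0+1) * A 1
      linear_combination h/2
    | succ k ih =>
      refine ⟨ih.2, ?_⟩
      have h := hrec (k + 2) (by omega)
      have hk3 : ((k : ℂ) + 2) + 1 ≠ 0 := by
        have h1 : ((k + 3 : ℕ) : ℂ) ≠ 0 := Nat.cast_ne_zero.2 (by omega)
        push_cast at h1
        intro hh
        apply h1
        linear_combination hh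
      push_cast at h
      rw [ih.1, ih.2] at h
      have : A (k + 2 + 1) = (-1)^(k+2) * c^(k+2) * A 1 := by
        apply mul_left_cancel₀ hk3
        linear_combination h
      exact this
  intro n hn
  obtain ⟨m, rfl⟩ : ∃ m, n = m + 1 := ⟨n - 1, by omega⟩
  exact (key m).1
end

section
/- Under the coordinate change ξ = 2μ₂/(1 + \bar{μ}₁μ₂), η = (1 − μ₁\bar{μ}₂)/(2\bar{μ}₂) (with μ₂ ≠ 0 and 1 + \bar{μ}₁μ₂ ≠ 0), the equation \bar{z}₀μ₁μ₂ + (t₀² + z₀\bar{z}₀)μ₂ − μ₁ − z₀ = 0 is equivalent to ξ(\bar{z}₀ − \bar{η}) − \bar{ξ}(z₀ − η) + |ξ|²(t₀² + |z₀ − η|² − 1/|ξ|²) = 0. -/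
open ComplexConjugate

/-!
With `w = conj ξ * (z₀ - η)`, the second expression equals `(w + 1) * (conj w - 1) + |ξ|² t₀²`.
Under the coordinate change `w + 1` and `conj w - 1` become multiples of `z₀ + μ₁` and
`μ₂ conj z₀ - 1`, and `(z₀ + μ₁) (μ₂ conj z₀ - 1) + μ₂ t₀²` is the first expression; altogether
the second expression is `4 conj μ₂ / |1 + conj μ₁ μ₂|²` times the first.
-/

theorem sphere_form_eq_mul_add (ξ η z : ℂ) (t : ℝ) (hξ : ξ ≠ 0) :
    ξ * (conj z - conj η) - conj ξ * (z - η) + (‖ξ‖ : ℂ) ^ 2 * ((t : ℂ) ^ 2 + (‖z - η‖ : ℂ) ^ 2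
      - 1 / (‖ξ‖ : ℂ) ^ 2)
      = (conj ξ * (z - η) + 1) * (ξ * (conj z - conj η) - 1) + ξ * conj ξ * (t : ℂ) ^ 2 := by
  have hξ' : conj ξ ≠ 0 := (map_ne_zero conj).mpr hξ
  rw [← Complex.mul_conj', ← Complex.mul_conj', map_sub]
  field_simp
  ring

section CoordinateChange

variable {μ₁ μ₂ ξ η : ℂ} (hμ₂ : μ₂ ≠ 0) (hden : 1 + conj μ₁ * μ₂ ≠ 0)
  (hξ : ξ = 2 * μ₂ / (1 + conj μ₁ * μ₂)) (hη : η = (1 - μ₁ * conj μ₂) / (2 * conj μ₂))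

include hξ in
theorem mul_conj_of_eq_div :
    ξ * conj ξ = 4 * μ₂ * conj μ₂ / ((1 + conj μ₁ * μ₂) * conj (1 + conj μ₁ * μ₂)) := by
  rw [hξ, map_div₀, map_mul, map_ofNat, div_mul_div_comm]
  ring

include hμ₂ hden hξ hη

theorem conj_mul_sub_add_one (z : ℂ) :
    conj ξ * (z - η) + 1 = 2 * conj μ₂ * (z + μ₁) / conj (1 + conj μ₁ * μ₂) := by
  have hμ₂' : conj μ₂ ≠ 0 := (map_ne_zero conj).mpr hμ₂
  have hden' : conj (1 + conj μ₁ * μ₂) ≠ 0 := (map_ne_zero conj).mpr hden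
  rw [hξ, hη, map_div₀, map_mul, map_ofNat]
  field_simp
  simp only [map_add, map_one, map_mul, Complex.conj_conj]
  ring

theorem mul_conj_sub_sub_one (z : ℂ) :
    ξ * (conj z - conj η) - 1 = 2 * (μ₂ * conj z - 1) / (1 + conj μ₁ * μ₂) := by
  rw [hξ, hη, map_div₀, map_mul, map_sub, map_mul, map_one, map_ofNat, Complex.conj_conj]
  rw [mul_comm (conj μ₁) μ₂] at hden ⊢
  field_simp
  ring

theorem sphere_form_eq_mul (z : ℂ) (t : ℝ) :
    ξ * (conj z - conj η) - conj ξ * (z - η) + (‖ξ‖ : ℂ) ^ 2 * ((t : ℂ) ^ 2 + (‖z - η‖ : ℂ) ^ 2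
      - 1 / (‖ξ‖ : ℂ) ^ 2)
      = 4 * conj μ₂ / ((1 + conj μ₁ * μ₂) * conj (1 + conj μ₁ * μ₂))
        * (conj z * μ₁ * μ₂ + ((t : ℂ) ^ 2 + z * conj z) * μ₂ - μ₁ - z) := by
  have hξ₀ : ξ ≠ 0 := hξ ▸ div_ne_zero (mul_ne_zero two_ne_zero hμ₂) hden
  have hden' : conj (1 + conj μ₁ * μ₂) ≠ 0 := (map_ne_zero conj).mpr hden
  rw [sphere_form_eq_mul_add _ _ _ _ hξ₀, conj_mul_sub_add_one hμ₂ hden hξ hη,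
    mul_conj_sub_sub_one hμ₂ hden hξ hη, mul_conj_of_eq_div hξ]
  generalize conj (1 + conj μ₁ * μ₂) = b at hden' ⊢
  generalize 1 + conj μ₁ * μ₂ = a at hden ⊢
  field_simp
  ring

end CoordinateChange

/-- Under the coordinate change `ξ = 2μ₂/(1 + conj μ₁ · μ₂)`,
`η = (1 − μ₁ conj μ₂)/(2 conj μ₂)` (with `μ₂ ≠ 0`, `1 + conj μ₁ · μ₂ ≠ 0`), the equation
`conj z₀ μ₁ μ₂ + (t₀² + z₀ conj z₀) μ₂ − μ₁ − z₀ = 0` is equivalent to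
`ξ(conj z₀ − conj η) − conj ξ (z₀ − η) + |ξ|²(t₀² + |z₀ − η|² − 1/|ξ|²) = 0`. -/
theorem sphere_eq_coordinate_change (μ₁ μ₂ z₀ : ℂ) (t₀ : ℝ)
    (hμ₂ : μ₂ ≠ 0) (hden : 1 + conj μ₁ * μ₂ ≠ 0)
    (ξ η : ℂ)
    (hξ : ξ = 2 * μ₂ / (1 + conj μ₁ * μ₂))
    (hη : η = (1 - μ₁ * conj μ₂) / (2 * conj μ₂)) :
    (conj z₀ * μ₁ * μ₂ + ((t₀ : ℂ)^2 + z₀ * conj z₀) * μ₂ - μ₁ - z₀ = 0)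
    ↔ (ξ * (conj z₀ - conj η) - conj ξ * (z₀ - η)
        + (‖ξ‖ : ℂ)^2 * ((t₀ : ℂ)^2 + (‖z₀ - η‖ : ℂ)^2
            - 1 / (‖ξ‖ : ℂ)^2) = 0) := by
  have hfactor : 4 * conj μ₂ / ((1 + conj μ₁ * μ₂) * conj (1 + conj μ₁ * μ₂)) ≠ 0 :=
    div_ne_zero (mul_ne_zero (by norm_num) ((map_ne_zero conj).mpr hμ₂))
      (mul_ne_zero hden ((map_ne_zero conj).mpr hden))
  rw [sphere_form_eq_mul hμ₂ hden hξ hη, mul_eq_zero, or_iff_right hfactor]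
end
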